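/- Let h* > 0. A 2π-periodic C⁴ function h : ℝ → ℝ with h(θ) > 0 for all θ satisfies (d/dθ)[h(θ)³·(h'(θ) + h'''(θ))] = 0 for all θ together with ∫₀^{2π} h(θ) dθ = 2π·h* if and only if there exist c₂ ∈ ℝ and θ₀ ∈ ℝ with |c₂| < h* such that h(θ) = h* + c₂·sin(θ − θ₀) for all θ ∈ ℝ. -/

import Mathlib

/-! With `u = h + h''`, the equation says that the flux `h³ u'` is a constant `q`. Then
`u' = q h⁻³`, and integrating over a period (`∮ u' = 0` by periodicity, `∮ h⁻³ > 0`) forces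
`q = 0`. Hence `h + h''` is a constant `C`, so `h - C` solves the harmonic oscillator and equals
`c sin (θ - θ₀)`. The prescribed mean gives `C = h*`, and positivity of `h` at the trough
`θ₀ - π/2` gives `|c| < h*`. Conversely, for such a sinusoid `h + h'' ≡ h*`, so `h' + h''' = 0`. -/

open Real

theorem Function.Periodic.deriv {𝕜 F : Type*} [NontriviallyNormedField 𝕜]
    [NormedAddCommGroup F] [NormedSpace 𝕜 F] {f : 𝕜 → F} {c : 𝕜}
    (hf : Function.Periodic f c) : Function.Periodic (deriv f) c := fun x => by
  rw [← deriv_comp_add_const, funext hf]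

theorem intervalIntegral_deriv_eq_zero_of_periodic {E : Type*} [NormedAddCommGroup E]
    [NormedSpace ℝ E] [CompleteSpace E] {f : ℝ → E} {T : ℝ} (hf : Function.Periodic f T)
    (hd : Differentiable ℝ f) (hc : Continuous (deriv f)) (a : ℝ) :
    ∫ x in a..a + T, deriv f x = 0 := by
  rw [intervalIntegral.integral_deriv_eq_sub (fun x _ => hd x) (hc.intervalIntegrable _ _), hf a,
    sub_self]

theorem deriv_eq_zero_of_periodic_of_mul_deriv_eq_const {u p : ℝ → ℝ} {T q : ℝ}
    (hu : Function.Periodic u T) (hT : 0 < T) (hud : Differentiable ℝ u)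
    (hc : Continuous (deriv u)) (hp : Continuous p) (hpos : ∀ x, 0 < p x)
    (hq : ∀ x, p x * deriv u x = q) (x : ℝ) : deriv u x = 0 := by
  have hdu : ∀ x, deriv u x = q * (p x)⁻¹ := fun x => by
    rw [eq_mul_inv_iff_mul_eq₀ (hpos x).ne', mul_comm, hq]
  have hI : 0 < ∫ x in 0..T, (p x)⁻¹ :=
    intervalIntegral.intervalIntegral_pos_of_pos
      ((hp.inv₀ fun x => (hpos x).ne').intervalIntegrable _ _) (fun x => inv_pos.2 (hpos x)) hT
  have hzero : q * ∫ x in 0..T, (p x)⁻¹ = 0 := by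
    rw [← intervalIntegral.integral_const_mul]
    simpa only [hdu, zero_add] using intervalIntegral_deriv_eq_zero_of_periodic hu hud hc 0
  rw [hdu, (mul_eq_zero.1 hzero).resolve_right hI.ne', zero_mul]

theorem eq_zero_of_hasDerivAt_of_hasDerivAt_neg {f f' : ℝ → ℝ}
    (hf : ∀ x, HasDerivAt f (f' x) x) (hf' : ∀ x, HasDerivAt f' (-f x) x)
    (h₀ : f 0 = 0) (h₀' : f' 0 = 0) (x : ℝ) : f x = 0 := by
  -- the energy `f ^ 2 + f' ^ 2` is conserved
  have hE : ∀ y, HasDerivAt (fun y => f y ^ 2 + f' y ^ 2) 0 y := fun y =>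
    (((hf y).pow 2).add ((hf' y).pow 2)).congr_deriv (by ring)
  have hE₀ : f x ^ 2 + f' x ^ 2 = 0 := by
    simpa [h₀, h₀'] using
      is_const_of_deriv_eq_zero (fun y => (hE y).differentiableAt) (fun y => (hE y).deriv) x 0
  nlinarith [sq_nonneg (f x), sq_nonneg (f' x)]

theorem eq_cos_add_sin_of_hasDerivAt {g g' : ℝ → ℝ}
    (hg : ∀ x, HasDerivAt g (g' x) x) (hg' : ∀ x, HasDerivAt g' (-g x) x) (x : ℝ) :
    g x = g 0 * cos x + g' 0 * sin x := by
  have key := eq_zero_of_hasDerivAt_of_hasDerivAt_neg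
    (f := fun x => g x - (g 0 * cos x + g' 0 * sin x))
    (f' := fun x => g' x - (-(g 0 * sin x) + g' 0 * cos x))
    (fun x => ((hg x).sub (((hasDerivAt_cos x).const_mul _).add
      ((hasDerivAt_sin x).const_mul _))).congr_deriv (by ring))
    (fun x => ((hg' x).sub ((((hasDerivAt_sin x).const_mul _).neg).add
      ((hasDerivAt_cos x).const_mul _))).congr_deriv (by ring))
    (by simp) (by simp) x
  exact sub_eq_zero.1 key

theorem exists_mul_sin_sub_eq_mul_cos_add_mul_sin (a b : ℝ) :
    ∃ c θ₀ : ℝ, ∀ θ, a * cos θ + b * sin θ = c * sin (θ - θ₀) := by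
  -- polar form of `b - a i`
  set z : ℂ := ⟨b, -a⟩
  refine ⟨‖z‖, Complex.arg z, fun θ => ?_⟩
  have hcos := Complex.norm_mul_cos_arg z
  have hsin := Complex.norm_mul_sin_arg z
  simp only [z] at hcos hsin
  rw [sin_sub]
  linear_combination (-sin θ) * hcos + cos θ * hsin

theorem exists_eq_add_mul_sin_sub_of_add_deriv_deriv_eq {h : ℝ → ℝ} {C : ℝ}
    (hd : Differentiable ℝ h) (hd' : Differentiable ℝ (deriv h))
    (hC : ∀ x, h x + deriv (deriv h) x = C) :
    ∃ c θ₀ : ℝ, ∀ θ, h θ = C + c * sin (θ - θ₀) := by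
  obtain ⟨c, θ₀, hc⟩ := exists_mul_sin_sub_eq_mul_cos_add_mul_sin (h 0 - C) (deriv h 0)
  refine ⟨c, θ₀, fun θ => ?_⟩
  have := eq_cos_add_sin_of_hasDerivAt (g := fun x => h x - C) (g' := deriv h)
    (fun x => (hd x).hasDerivAt.sub_const C)
    (fun x => (hd' x).hasDerivAt.congr_deriv (by linarith [hC x])) θ
  rw [← hc]
  linarith

theorem integral_add_mul_sin_sub (m c θ₀ : ℝ) :
    ∫ θ in 0..2 * π, (m + c * sin (θ - θ₀)) = 2 * π * m := by
  rw [intervalIntegral.integral_add intervalIntegrable_const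
    ((by fun_prop : Continuous fun θ => c * sin (θ - θ₀)).intervalIntegrable _ _),
    intervalIntegral.integral_const_mul, intervalIntegral.integral_comp_sub_right _ θ₀,
    integral_sin]
  simp

theorem forall_pos_add_mul_sin_sub_iff {m c θ₀ : ℝ} :
    (∀ θ, 0 < m + c * sin (θ - θ₀)) ↔ |c| < m := by
  constructor
  · intro hpos
    have h₁ := hpos (θ₀ + π / 2)
    have h₂ := hpos (θ₀ - π / 2)
    simp only [add_sub_cancel_left, sub_sub_cancel_left, sin_neg, sin_pi_div_two] at h₁ h₂
    exact abs_lt.2 ⟨by linarith, by linarith⟩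
  · intro hc θ
    have : |c * sin (θ - θ₀)| ≤ |c| := by
      rw [abs_mul]; exact mul_le_of_le_one_right (abs_nonneg c) (abs_sin_le_one _)
    linarith [neg_abs_le (c * sin (θ - θ₀))]

theorem deriv_add_iteratedDeriv_three {h : ℝ → ℝ} (hd : Differentiable ℝ h)
    (hd'' : Differentiable ℝ (deriv (deriv h))) (x : ℝ) :
    deriv h x + iteratedDeriv 3 h x = deriv (fun y => h y + deriv (deriv h) y) x := by
  rw [iteratedDeriv_eq_iterate]
  exact ((hd x).hasDerivAt.add (hd'' x).hasDerivAt).deriv.symm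

theorem add_deriv_deriv_eq_of_deriv_pow_mul_eq_zero {h : ℝ → ℝ} {T : ℝ} (n : ℕ)
    (hper : Function.Periodic h T) (hT : 0 < T) (hC : ContDiff ℝ 4 h) (hpos : ∀ θ, 0 < h θ)
    (hflux : ∀ θ, deriv (fun φ => h φ ^ n * (deriv h φ + iteratedDeriv 3 h φ)) θ = 0) (θ : ℝ) :
    h θ + deriv (deriv h) θ = h 0 + deriv (deriv h) 0 := by
  have hd : Differentiable ℝ h := hC.differentiable (by norm_num)
  have hd' : Differentiable ℝ (deriv h) := (hC.iterate_deriv' 3 1).differentiable (by norm_num)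
  have hd'' : Differentiable ℝ (deriv (deriv h)) :=
    (hC.iterate_deriv' 2 2).differentiable (by norm_num)
  have hd''' : Differentiable ℝ (iteratedDeriv 3 h) :=
    hC.differentiable_iteratedDeriv 3 (by norm_num)
  set u := fun y => h y + deriv (deriv h) y
  have hu' : deriv u = fun θ => deriv h θ + iteratedDeriv 3 h θ :=
    funext fun θ => (deriv_add_iteratedDeriv_three hd hd'' θ).symm
  have hq : ∀ θ, h θ ^ n * deriv u θ = h 0 ^ n * deriv u 0 := by
    rw [hu']
    exact fun θ => is_const_of_deriv_eq_zero ((hd.pow n).mul (hd'.add hd''')) hflux θ 0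
  have hu'_zero := deriv_eq_zero_of_periodic_of_mul_deriv_eq_const (hper.add hper.deriv.deriv) hT
    (hd.add hd'') (hu' ▸ (hd'.add hd''').continuous) (hC.continuous.pow n)
    (fun θ => pow_pos (hpos θ) n) hq
  exact is_const_of_deriv_eq_zero (hd.add hd'') hu'_zero θ 0

theorem stmt_9_general (hstar : ℝ) (h : ℝ → ℝ) :
    (Function.Periodic h (2 * π) ∧ ContDiff ℝ 4 h ∧ (∀ θ, 0 < h θ) ∧
      (∀ θ : ℝ, deriv (fun φ => (h φ) ^ 3 * (deriv h φ + iteratedDeriv 3 h φ)) θ = 0) ∧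
      (∫ θ in (0:ℝ)..(2 * π), h θ) = 2 * π * hstar)
    ↔ ∃ c₂ θ₀ : ℝ, |c₂| < hstar ∧
        ∀ θ : ℝ, h θ = hstar + c₂ * Real.sin (θ - θ₀) := by
  constructor
  · rintro ⟨hper, hC, hpos, hflux, hmean⟩
    obtain ⟨c, θ₀, hsin⟩ := exists_eq_add_mul_sin_sub_of_add_deriv_deriv_eq
      (hC.differentiable (by norm_num)) ((hC.iterate_deriv' 3 1).differentiable (by norm_num))
      (add_deriv_deriv_eq_of_deriv_pow_mul_eq_zero 3 hper two_pi_pos hC hpos hflux)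
    obtain rfl : h 0 + deriv (deriv h) 0 = hstar := by
      rw [funext hsin, integral_add_mul_sin_sub] at hmean
      exact mul_left_cancel₀ two_pi_pos.ne' hmean
    exact ⟨c, θ₀, forall_pos_add_mul_sin_sub_iff.1 (funext hsin ▸ hpos), hsin⟩
  · rintro ⟨c, θ₀, hc, hh⟩
    set s : ℝ → ℝ := fun θ => hstar + c * sin (θ - θ₀)
    obtain rfl : h = s := funext hh
    have hs : Differentiable ℝ s := by fun_prop
    have hconst : ∀ θ, s θ + deriv (deriv s) θ = hstar := fun θ => by simp [s]
    have hs'' : Differentiable ℝ (deriv (deriv s)) := by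
      rw [show deriv (deriv s) = fun θ => hstar - s θ from funext fun θ => by linarith [hconst θ]]
      fun_prop
    refine ⟨fun θ => ?_, by fun_prop, forall_pos_add_mul_sin_sub_iff.2 hc, fun θ => ?_,
      integral_add_mul_sin_sub ..⟩
    · simp [s, add_sub_right_comm, sin_add_two_pi]
    · simp only [deriv_add_iteratedDeriv_three hs hs'', hconst, deriv_const, mul_zero]

/-- Classification of positive 2π-periodic C⁴ solutions of
    ∂_θ(h³(h' + h''')) = 0 with prescribed average h*: they are exactly the
    functions h* + c₂ sin(θ − θ₀) with |c₂| < h*. -/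
theorem stmt_9 (hstar : ℝ) (hpos : 0 < hstar) (h : ℝ → ℝ) :
    (Function.Periodic h (2 * π) ∧ ContDiff ℝ 4 h ∧ (∀ θ, 0 < h θ) ∧
      (∀ θ : ℝ, deriv (fun φ => (h φ) ^ 3 * (deriv h φ + iteratedDeriv 3 h φ)) θ = 0) ∧
      (∫ θ in (0:ℝ)..(2 * π), h θ) = 2 * π * hstar)
    ↔ ∃ c₂ θ₀ : ℝ, |c₂| < hstar ∧
        ∀ θ : ℝ, h θ = hstar + c₂ * Real.sin (θ - θ₀) :=
  stmt_9_general hstar h
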